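/- arXiv:2006.00376 — 6 statements merged into one kernel-verified Lean document; each statement's English description precedes it below -/
import Mathlib

section
/- There exist a positive integer Z, a length T, a request sequence σ ∈ ℕ^T, and vectors b, b' ∈ {0,1}^T with b ≤ b' (differing in exactly one coordinate) such that the delayed hits latency satisfies ℓ_σ(b) < ℓ_σ(b'). Hence the delayed hits latency function is not antimonotone. -/
/-!
Serve item `1` once at time `1` and then at every time after `m`, within one delay window.
If every request misses, the later requests all piggyback on the fetch started at time `1`
and wait little. Turning the first request into a hit saves its latency `Z`, but the later
requests now wait for a fetch started only at time `m + 1`: each of the `Z - m` of them waits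
`m` steps longer. The latency therefore grows by `m (Z - m) - Z`, which is positive for
`Z = 6`, `m = 3`.
-/

/-- Earliest in-flight miss for request `t` in the delayed hits model. -/
noncomputable def pD (Z : ℕ) (σ : ℕ → ℕ) (b : ℕ → Bool) (t : ℕ) : ℕ :=
  sInf {s | max 1 (t + 1 - Z) ≤ s ∧ s ≤ t ∧ b s = false ∧ σ s = σ t}

/-- Delayed hits latency `ℓ_σ(b) = Σ_t (1 - b_t)(Z - (t - p_t(b)))`
(item `0` means no request). -/
noncomputable def ellD (Z T : ℕ) (σ : ℕ → ℕ) (b : ℕ → Bool) : ℤ :=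
  ∑ t ∈ Finset.Icc 1 T, if σ t = 0 ∨ b t then 0 else (Z : ℤ) - t + pD Z σ b t

open Finset

theorem pD_eq_of_isLeast {Z : ℕ} {σ : ℕ → ℕ} {b : ℕ → Bool} {t k : ℕ}
    (h : IsLeast {s | max 1 (t + 1 - Z) ≤ s ∧ s ≤ t ∧ b s = false ∧ σ s = σ t} k) :
    pD Z σ b t = k :=
  h.csInf_eq

theorem pD_eq_one {Z : ℕ} {σ : ℕ → ℕ} {b : ℕ → Bool} {t : ℕ} (ht : t ∈ Icc 1 Z)
    (hb : b 1 = false) (hσ : σ 1 = σ t) : pD Z σ b t = 1 := by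
  rw [mem_Icc] at ht
  exact pD_eq_of_isLeast ⟨⟨by omega, ht.1, hb, hσ⟩, fun s hs => le_of_max_le_left hs.1⟩

noncomputable def latencyTerm (Z : ℕ) (σ : ℕ → ℕ) (b : ℕ → Bool) (t : ℕ) : ℤ :=
  if σ t = 0 ∨ b t then 0 else (Z : ℤ) - t + pD Z σ b t

theorem ellD_eq_sum_latencyTerm (Z T : ℕ) (σ : ℕ → ℕ) (b : ℕ → Bool) :
    ellD Z T σ b = ∑ t ∈ Icc 1 T, latencyTerm Z σ b t :=
  rfl

def lateRepeats (m t : ℕ) : ℕ := if t = 1 ∨ m < t then 1 else 0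

section lateRepeats

variable {Z m t : ℕ}

theorem pD_hitFirst_lateRepeats (hm : 1 ≤ m) (ht : t ∈ Ioc m Z) :
    pD Z (lateRepeats m) (fun s => decide (s = 1)) t = m + 1 := by
  rw [mem_Ioc] at ht
  refine pD_eq_of_isLeast ⟨⟨by omega, ht.1, decide_eq_false (by omega),
    by simp [lateRepeats, ht.1]⟩, ?_⟩
  rintro s ⟨-, -, hs₁, hσs⟩
  have hs : s = 1 ∨ m < s := by
    by_contra h
    simp [lateRepeats, h, ht.1] at hσs
  simp only [decide_eq_false_iff_not] at hs₁
  omega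

theorem latencyTerm_hitFirst_sub_allMiss (hm : 1 ≤ m) (ht : t ∈ Icc 1 Z) :
    latencyTerm Z (lateRepeats m) (fun s => decide (s = 1)) t -
        latencyTerm Z (lateRepeats m) (fun _ => false) t =
      (if m < t then (m : ℤ) else 0) - if t = 1 then (Z : ℤ) else 0 := by
  rcases eq_or_ne t 1 with rfl | ht₁
  · have hpD := pD_eq_one (σ := lateRepeats m) (b := fun _ => false) ht rfl rfl
    simp [latencyTerm, lateRepeats, hpD, show ¬m < 1 by omega]
  by_cases hmt : m < t
  · have hpD := pD_eq_one (σ := lateRepeats m) (b := fun _ => false) ht rfl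
      (by simp [lateRepeats, hmt])
    have hpD' := pD_hitFirst_lateRepeats hm (mem_Ioc.2 ⟨hmt, (mem_Icc.1 ht).2⟩)
    simp [latencyTerm, lateRepeats, hmt, ht₁, hpD, hpD']
  · simp [latencyTerm, lateRepeats, hmt, ht₁]

theorem ellD_hitFirst_sub_ellD_allMiss (hm : 1 ≤ m) :
    ellD Z Z (lateRepeats m) (fun t => decide (t = 1)) -
        ellD Z Z (lateRepeats m) (fun _ => false) = m * (Z - m : ℕ) - Z := by
  rw [ellD_eq_sum_latencyTerm, ellD_eq_sum_latencyTerm, ← sum_sub_distrib,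
    sum_congr rfl fun t ht => latencyTerm_hitFirst_sub_allMiss hm ht,
    sum_sub_distrib, ← sum_filter, sum_ite_eq', sum_const, nsmul_eq_mul]
  have hfilter : {t ∈ Icc 1 Z | m < t} = Ioc m Z := by
    ext t; simp only [mem_filter, mem_Icc, mem_Ioc]; omega
  simp only [hfilter, Nat.card_Ioc, mem_Icc, le_refl, true_and]
  split_ifs with hZ
  · ring
  · simp [show Z = 0 by omega]

end lateRepeats

/-- The delayed hits latency function is not antimonotone: there exist a delay
`Z`, a request sequence `σ` of length `T`, and hit vectors `b ≤ b'` differing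
in exactly one coordinate with `ℓ_σ(b) < ℓ_σ(b')`. -/
theorem delayed_hits_not_antimonotone :
    ∃ (Z T : ℕ) (σ : ℕ → ℕ) (b b' : ℕ → Bool),
      0 < Z ∧
      (∀ t, b t = true → b' t = true) ∧
      (∃ t0 ∈ Finset.Icc 1 T, b t0 = false ∧ b' t0 = true ∧
        ∀ t, t ≠ t0 → b t = b' t) ∧
      ellD Z T σ b < ellD Z T σ b' := by
  refine ⟨6, 6, lateRepeats 3, fun _ => false, fun t => decide (t = 1), by norm_num,
    fun _ h => absurd h Bool.false_ne_true,
    ⟨1, by simp, rfl, rfl, fun t ht => by simp [ht]⟩, ?_⟩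
  have hdiff := ellD_hitFirst_sub_ellD_allMiss (Z := 6) (show 1 ≤ 3 by norm_num)
  norm_num at hdiff
  linarith
end

section
/- For every request sequence σ = (i_t)_{t=1}^T and every execution of any caching algorithm on σ with hit vector b, the total incurred latency equals Σ_{t=1}^T (1 - b_t)(Z - (t - p_t)), where p_t = min { t' ∈ [t - Z + 1, t] : b_{t'} = 0 and i_{t'} = i_t }. -/
/-- Operational serve time of a missed request `t`: the earliest retrieval
time `r ≥ t` such that the fetch initiated by the miss at time `r + 1 - Z ≤ t`
was for the same item (that fetch returns at the retrieval phase of time `r`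
and serves the queued request `t`). -/
noncomputable def serveTime (Z : ℕ) (σ : ℕ → ℕ) (b : ℕ → Bool) (t : ℕ) : ℕ :=
  sInf {r | t ≤ r ∧ 1 ≤ r + 1 - Z ∧ r + 1 - Z ≤ t ∧
            b (r + 1 - Z) = false ∧ σ (r + 1 - Z) = σ t}

/-- A feasible execution of a caching algorithm with cache size `k` and delay
`Z` on the request sequence `σ` (item `0` = no request): the cache starts as
`{1,…,k}`, never exceeds `k` items, and changes only at a retrieval phase,
where it may only gain the retrieved item. -/
def IsSchedule (Z k : ℕ) (σ : ℕ → ℕ) (C : ℕ → Finset ℕ) : Prop :=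
  C 0 = Finset.Icc 1 k ∧ (∀ t, (C t).card ≤ k) ∧
    ∀ t, 1 ≤ t →
      if Z ≤ t ∧ σ (t + 1 - Z) ≠ 0 ∧ σ (t + 1 - Z) ∉ C (t - Z)
      then C t ⊆ C (t - 1) ∪ {σ (t + 1 - Z)}
      else C t = C (t - 1)

/-- The hit vector of an execution: request `t` hits iff it is in the cache. -/
def hitOf (σ : ℕ → ℕ) (C : ℕ → Finset ℕ) (t : ℕ) : Bool :=
  decide (σ t ∈ C (t - 1))

/-- For every request sequence `σ` and every execution of any caching
algorithm on `σ` with hit vector `b`, the total incurred latency (each missed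
request `t` is served at its retrieval time, incurring `serveTime - t + 1`)
equals `Σ_t (1 - b_t)(Z - (t - p_t))`. -/
theorem latency_closed_form (Z k T : ℕ) (hZ : 1 ≤ Z) (σ : ℕ → ℕ)
    (C : ℕ → Finset ℕ) (hC : IsSchedule Z k σ C) :
    (∑ t ∈ Finset.Icc 1 T, if σ t = 0 ∨ hitOf σ C t then 0
        else serveTime Z σ (hitOf σ C) t - t + 1)
      = ∑ t ∈ Finset.Icc 1 T, if σ t = 0 ∨ hitOf σ C t then 0
          else Z - (t - pD Z σ (hitOf σ C) t) := by
  apply Finset.sum_congr rfl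
  intro t ht
  rw [Finset.mem_Icc] at ht
  by_cases h : σ t = 0 ∨ hitOf σ C t
  · simp [h]
  · simp only [h, if_false]
    push_neg at h
    obtain ⟨-, hb⟩ := h
    replace hb : hitOf σ C t = false := by simpa using hb
    set b := hitOf σ C with hbdef
    have htS : t ∈ {s | max 1 (t + 1 - Z) ≤ s ∧ s ≤ t ∧ b s = false ∧ σ s = σ t} :=
      ⟨max_le ht.1 (by omega), le_rfl, hb, rfl⟩
    have hpD : pD Z σ b t
        = sInf {s | max 1 (t + 1 - Z) ≤ s ∧ s ≤ t ∧ b s = false ∧ σ s = σ t} := rfl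
    have hpmem := Nat.sInf_mem ⟨t, htS⟩
    obtain ⟨hp1, hp2, hp3, hp4⟩ := hpmem
    have hp1a : 1 ≤ sInf {s | max 1 (t + 1 - Z) ≤ s ∧ s ≤ t ∧ b s = false ∧ σ s = σ t} :=
      le_trans (le_max_left _ _) hp1
    have hp1b : t + 1 - Z ≤ sInf {s | max 1 (t + 1 - Z) ≤ s ∧ s ≤ t ∧ b s = false ∧ σ s = σ t} :=
      le_trans (le_max_right _ _) hp1
    set p := sInf {s | max 1 (t + 1 - Z) ≤ s ∧ s ≤ t ∧ b s = false ∧ σ s = σ t} with hp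
    have hkey : serveTime Z σ b t = p + Z - 1 := by
      have hs : p + Z - 1 + 1 - Z = p := by omega
      have hmem : (p + Z - 1) ∈ {r | t ≤ r ∧ 1 ≤ r + 1 - Z ∧ r + 1 - Z ≤ t ∧
            b (r + 1 - Z) = false ∧ σ (r + 1 - Z) = σ t} :=
        ⟨by omega, by omega, by omega, by rw [hs]; exact hp3, by rw [hs]; exact hp4⟩
      apply le_antisymm
      · exact Nat.sInf_le hmem
      · have hsT : serveTime Z σ b t = sInf {r | t ≤ r ∧ 1 ≤ r + 1 - Z ∧ r + 1 - Z ≤ t ∧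
            b (r + 1 - Z) = false ∧ σ (r + 1 - Z) = σ t} := rfl
        have hrm := Nat.sInf_mem ⟨_, hmem⟩
        rw [← hsT] at hrm
        obtain ⟨hr1, hr2, hr3, hr4, hr5⟩ := hrm
        have hle : p ≤ serveTime Z σ b t + 1 - Z :=
          Nat.sInf_le ⟨max_le hr2 (by omega), hr3, hr4, hr5⟩
        omega
    rw [hpD, hkey]
    omega
end

section
/- Any deterministic online algorithm for the delayed hits caching problem with cache size k and delay parameter Z has competitive ratio at least 1 + k(Z+1)/2 = Ω(kZ). -/
/-- Total delayed hits latency over times `1..T` (item `0` means no request). -/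
noncomputable def latN (Z T : ℕ) (σ : ℕ → ℕ) (b : ℕ → Bool) : ℕ :=
  ∑ t ∈ Finset.Icc 1 T, if σ t = 0 ∨ b t then 0 else Z - (t - pD Z σ b t)

/-- The optimal offline delayed hits latency on `σ` (over times `1..T`). -/
noncomputable def OPT (Z k T : ℕ) (σ : ℕ → ℕ) : ℕ :=
  sInf {L | ∃ C, IsSchedule Z k σ C ∧ latN Z T σ (hitOf σ C) = L}

/-- The item retrieved from the backing store after the request list `l` was
processed (if any): the request `Z` steps back, provided it missed. -/
def retrieved (Z : ℕ) (Alg : List ℕ → Finset ℕ) (l : List ℕ) : Finset ℕ :=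
  if Z ≤ l.length ∧ l.getD (l.length - Z) 0 ≠ 0 ∧
      l.getD (l.length - Z) 0 ∉ Alg (l.take (l.length - Z))
  then {l.getD (l.length - Z) 0} else ∅

/-- A deterministic online algorithm with cache size `k`: a map from request
histories to cache states that starts at `{1,…,k}`, never exceeds `k` items,
and changes only when an item is retrieved, gaining at most that item. -/
def OnlineValid (Z k : ℕ) (Alg : List ℕ → Finset ℕ) : Prop :=
  Alg [] = Finset.Icc 1 k ∧ (∀ l, (Alg l).card ≤ k) ∧
    ∀ l i, (retrieved Z Alg (l ++ [i]) = ∅ → Alg (l ++ [i]) = Alg l) ∧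
      Alg (l ++ [i]) ⊆ Alg l ∪ retrieved Z Alg (l ++ [i])

/-- The first `m` requests of `σ` as a list. -/
def prefList (σ : ℕ → ℕ) (m : ℕ) : List ℕ := (List.range m).map fun s => σ (s + 1)

/-- The hit vector of the online algorithm `Alg` on `σ`. -/
def algHit (σ : ℕ → ℕ) (Alg : List ℕ → Finset ℕ) (t : ℕ) : Bool :=
  decide (σ t ∈ Alg (prefList σ (t - 1)))



section ADV

variable (Z k : ℕ) (Alg : List ℕ → Finset ℕ)

/-- A fresh item of `{1,…,k+1}` not in the cache `c`. -/
noncomputable def newItem (c : Finset ℕ) : ℕ :=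
  sInf {i : ℕ | i ∈ Finset.Icc 1 (k+1) ∧ i ∉ c}

lemma newItem_spec {c : Finset ℕ} (hc : c.card ≤ k) :
    newItem k c ∈ Finset.Icc 1 (k+1) ∧ newItem k c ∉ c := by
  have hne : {i : ℕ | i ∈ Finset.Icc 1 (k+1) ∧ i ∉ c}.Nonempty := by
    have h : ∃ e ∈ Finset.Icc 1 (k+1), e ∉ c := by
      by_contra h'; push_neg at h'
      have := Finset.card_le_card h'
      simp [Nat.card_Icc] at this; omega
    obtain ⟨e, he, hec⟩ := h
    exact ⟨e, he, hec⟩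
  exact Nat.sInf_mem hne

/-- The adversarial request prefix after `j` bursts. -/
noncomputable def pref : ℕ → List ℕ
  | 0 => (k+1) :: List.replicate Z 0
  | j+1 => pref j ++ (List.replicate Z (newItem k (Alg (pref j))) ++ List.replicate Z 0)

/-- The item used in burst `j`. -/
noncomputable def itm (j : ℕ) : ℕ := newItem k (Alg (pref Z k Alg j))

/-- The adversarial request sequence. -/
noncomputable def advσ (t : ℕ) : ℕ := (pref Z k Alg k).getD (t-1) 0

lemma pref_length (j : ℕ) : (pref Z k Alg j).length = Z + 1 + 2*Z*j := by
  induction j with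
  | zero => simp [pref]
  | succ j ih => simp [pref, ih]; ring

lemma pref_prefix {j j' : ℕ} (h : j ≤ j') : pref Z k Alg j <+: pref Z k Alg j' := by
  induction j' with
  | zero => rw [Nat.le_zero.mp h]
  | succ j' ih =>
    rcases Nat.lt_or_ge j (j'+1) with h' | h'
    · exact (ih (by omega)).trans ⟨_, rfl⟩
    · rw [show j = j'+1 by omega]

lemma pref_getD_agree {j j' idx : ℕ} (h : j ≤ j') (hidx : idx < (pref Z k Alg j).length) :
    (pref Z k Alg j').getD idx 0 = (pref Z k Alg j).getD idx 0 := by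
  obtain ⟨t, ht⟩ := pref_prefix Z k Alg h
  rw [← ht, List.getD_append _ _ _ _ hidx]

lemma pref_getD_zero (j : ℕ) : (pref Z k Alg j).getD 0 0 = k+1 := by
  rw [pref_getD_agree Z k Alg (Nat.zero_le j) (by rw [pref_length]; omega)]
  simp [pref]

lemma pref_getD_initgap (j : ℕ) {idx : ℕ} (h1 : 1 ≤ idx) (h2 : idx ≤ Z) :
    (pref Z k Alg j).getD idx 0 = 0 := by
  rw [pref_getD_agree Z k Alg (Nat.zero_le j) (by simp [pref_length]; omega)]
  show ((k+1) :: List.replicate Z 0).getD idx 0 = 0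
  cases idx with
  | zero => omega
  | succ n =>
    simp only [List.getD_cons_succ]
    rcases Nat.lt_or_ge n Z with h | h
    · simp [List.getD_eq_getElem, h]
    · omega

lemma pref_getD_burst {j j' i : ℕ} (hj : j < j') (hi : i < Z) :
    (pref Z k Alg j').getD (Z + 1 + 2*Z*j + i) 0 = itm Z k Alg j := by
  rw [pref_getD_agree Z k Alg (show j+1 ≤ j' by omega)
    (by simp [pref_length]; nlinarith)]
  show (pref Z k Alg j ++ _).getD _ 0 = _
  rw [List.getD_append_right _ _ _ _ (by rw [pref_length]; omega)]
  rw [pref_length]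
  rw [List.getD_append _ _ _ _ (by simp; omega)]
  simp only [show Z + 1 + 2*Z*j + i - (Z + 1 + 2*Z*j) = i by omega]
  simp [List.getD_eq_getElem, hi, itm]

lemma pref_getD_gap {j j' i : ℕ} (hj : j < j') (hi : i < Z) :
    (pref Z k Alg j').getD (Z + 1 + 2*Z*j + Z + i) 0 = 0 := by
  rw [pref_getD_agree Z k Alg (show j+1 ≤ j' by omega)
    (by simp [pref_length]; nlinarith)]
  show (pref Z k Alg j ++ _).getD _ 0 = _
  rw [List.getD_append_right _ _ _ _ (by rw [pref_length]; omega)]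
  rw [pref_length]
  rw [List.getD_append_right _ _ _ _ (by simp; omega)]
  simp only [List.length_replicate]
  rcases Nat.lt_or_ge (Z + 1 + 2*Z*j + Z + i - (Z + 1 + 2*Z*j) - Z) Z with h | h
  · simp [List.getD_eq_getElem, h]
  · omega

/-- Converse: nonzero entries are at position 0 or in a burst. -/
lemma pref_getD_ne_zero {j idx : ℕ} (h : (pref Z k Alg j).getD idx 0 ≠ 0) :
    idx = 0 ∨ ∃ j' < j, Z + 1 + 2*Z*j' ≤ idx ∧ idx < Z + 1 + 2*Z*j' + Z := by
  induction j with
  | zero =>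
    left
    by_contra hne
    rcases Nat.lt_or_ge idx (Z+1) with h' | h'
    · exact h (pref_getD_initgap Z k Alg 0 (by omega) (by omega))
    · exact h (List.getD_eq_default _ _ (by simp [pref_length]; omega))
  | succ j ih =>
    rcases Nat.lt_or_ge idx (Z + 1 + 2*Z*j) with h1 | h1
    · rw [pref_getD_agree Z k Alg (Nat.le_succ j) (by rw [pref_length]; omega)] at h
      rcases ih h with h' | ⟨j', hj', h2⟩
      · exact Or.inl h'
      · exact Or.inr ⟨j', by omega, h2⟩
    · rcases Nat.lt_or_ge idx (Z + 1 + 2*Z*j + Z) with h2 | h2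
      · exact Or.inr ⟨j, by omega, by omega, by omega⟩
      · rcases Nat.lt_or_ge idx (Z + 1 + 2*Z*j + 2*Z) with h3 | h3
        · exfalso
          exact h (by
            have := pref_getD_gap Z k Alg (Nat.lt_succ_self j)
              (show idx - (Z + 1 + 2*Z*j + Z) < Z by omega)
            rwa [show Z + 1 + 2*Z*j + Z + (idx - (Z + 1 + 2*Z*j + Z)) = idx by omega] at this)
        · exact absurd (List.getD_eq_default _ _ (by simp only [pref_length, Nat.mul_add, Nat.mul_one]; omega)) h

end ADV

section ADV2

variable (Z k : ℕ) (Alg : List ℕ → Finset ℕ)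

lemma advσ_one : advσ Z k Alg 1 = k + 1 := pref_getD_zero Z k Alg k

lemma advσ_burst {j i : ℕ} (hj : j < k) (hi : i < Z) :
    advσ Z k Alg (Z + 2 + 2*Z*j + i) = itm Z k Alg j := by
  show (pref Z k Alg k).getD (Z + 2 + 2*Z*j + i - 1) 0 = _
  rw [show Z + 2 + 2*Z*j + i - 1 = Z + 1 + 2*Z*j + i by omega]
  exact pref_getD_burst Z k Alg hj hi

lemma advσ_gap (hZ : 1 ≤ Z) {j t : ℕ} (hj : j < k) (h1 : Z + 2 + 2*Z*j - Z ≤ t)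
    (h2 : t < Z + 2 + 2*Z*j) : advσ Z k Alg t = 0 := by
  show (pref Z k Alg k).getD (t - 1) 0 = 0
  cases j with
  | zero =>
    exact pref_getD_initgap Z k Alg k (by omega) (by simp [Nat.mul_zero] at h1 h2 ⊢; omega)
  | succ j =>
    have e : 2*Z*(j+1) = 2*Z*j + 2*Z := by ring
    have hi : t - 1 = Z + 1 + 2*Z*j + Z + (t - 1 - (Z + 1 + 2*Z*j + Z)) := by omega
    rw [hi]
    exact pref_getD_gap Z k Alg (by omega) (by omega)

lemma advσ_ne_zero {t : ℕ} (ht : 1 ≤ t) (h : advσ Z k Alg t ≠ 0) :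
    t = 1 ∨ ∃ j < k, Z + 2 + 2*Z*j ≤ t ∧ t ≤ Z + 1 + 2*Z*j + Z := by
  rcases pref_getD_ne_zero Z k Alg h with h' | ⟨j, hj, hl, hr⟩
  · left; omega
  · right; exact ⟨j, hj, by omega, by omega⟩

lemma itm_mem (hAlg : OnlineValid Z k Alg) (j : ℕ) :
    itm Z k Alg j ∈ Finset.Icc 1 (k+1) ∧ itm Z k Alg j ∉ Alg (pref Z k Alg j) :=
  newItem_spec k (hAlg.2.1 _)

lemma itm_ne_zero (hAlg : OnlineValid Z k Alg) (j : ℕ) : itm Z k Alg j ≠ 0 := by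
  have := (itm_mem Z k Alg hAlg j).1
  simp [Finset.mem_Icc] at this; omega

lemma prefList_succ (σ : ℕ → ℕ) (m : ℕ) :
    prefList σ (m+1) = prefList σ m ++ [σ (m+1)] := by
  simp [prefList, List.range_succ]

lemma prefList_length (σ : ℕ → ℕ) (m : ℕ) : (prefList σ m).length = m := by
  simp [prefList]

lemma prefList_getD (σ : ℕ → ℕ) {s m : ℕ} (h : s < m) :
    (prefList σ m).getD s 0 = σ (s+1) := by
  rw [List.getD_eq_getElem _ _ (by simpa [prefList_length])]
  simp [prefList, h]

lemma prefList_take {m : ℕ} (hm : m ≤ (pref Z k Alg k).length) :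
    prefList (advσ Z k Alg) m = (pref Z k Alg k).take m := by
  induction m with
  | zero => simp [prefList]
  | succ m ih =>
    rw [prefList_succ, ih (by omega), List.take_succ]
    have hlt : m < (pref Z k Alg k).length := by omega
    have : (pref Z k Alg k)[m]? = some ((pref Z k Alg k)[m]) := List.getElem?_eq_getElem hlt
    rw [this]
    congr 1
    show [advσ Z k Alg (m+1)] = _
    have : advσ Z k Alg (m+1) = (pref Z k Alg k).getD m 0 := by
      show (pref Z k Alg k).getD (m+1-1) 0 = _
      congr 1
    rw [this, List.getD_eq_getElem _ _ hlt]
    rfl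

lemma prefList_pref {j : ℕ} (hj : j ≤ k) :
    prefList (advσ Z k Alg) (Z + 1 + 2*Z*j) = pref Z k Alg j := by
  have hmul : 2*Z*j ≤ 2*Z*k := Nat.mul_le_mul_left _ hj
  have h := prefList_take Z k Alg (m := Z + 1 + 2*Z*j) (by rw [pref_length]; omega)
  rw [h]
  have hp := pref_prefix Z k Alg hj
  rw [List.prefix_iff_eq_take] at hp
  rw [hp, pref_length]

lemma alg_stable (hAlg : OnlineValid Z k Alg) (hZ : 1 ≤ Z) {j : ℕ} (hj : j < k) :
    ∀ i, i < Z → Alg (prefList (advσ Z k Alg) (Z + 1 + 2*Z*j + i)) = Alg (pref Z k Alg j) := by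
  intro i hi
  induction i with
  | zero => rw [Nat.add_zero, prefList_pref Z k Alg (le_of_lt hj)]
  | succ i ih =>
    rw [show Z + 1 + 2*Z*j + (i+1) = (Z + 1 + 2*Z*j + i) + 1 by omega, prefList_succ]
    rw [(hAlg.2.2 _ _).1 _]
    · exact ih (by omega)
    · -- retrieved is empty
      rw [← prefList_succ]
      set m := Z + 1 + 2*Z*j + i + 1 with hm
      have hlen : (prefList (advσ Z k Alg) m).length = m := prefList_length _ _
      have hσ : advσ Z k Alg (m - Z + 1) = 0 := by
        apply advσ_gap Z k Alg hZ hj <;> omega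
      unfold retrieved
      rw [if_neg]
      rw [hlen]
      rw [prefList_getD _ (by omega), hσ]
      simp

lemma algHit_burst (hAlg : OnlineValid Z k Alg) (hZ : 1 ≤ Z) {j i : ℕ} (hj : j < k) (hi : i < Z) :
    algHit (advσ Z k Alg) Alg (Z + 2 + 2*Z*j + i) = false := by
  unfold algHit
  rw [show Z + 2 + 2*Z*j + i - 1 = Z + 1 + 2*Z*j + i by omega]
  rw [alg_stable Z k Alg hAlg hZ hj i hi]
  rw [advσ_burst Z k Alg hj hi]
  simp [(itm_mem Z k Alg hAlg j).2]

lemma pD_one (σ : ℕ → ℕ) (b : ℕ → Bool) (hZ : 1 ≤ Z) (hb : b 1 = false) :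
    pD Z σ b 1 = 1 := by
  have h1 : 1 ∈ {s | max 1 (1 + 1 - Z) ≤ s ∧ s ≤ 1 ∧ b s = false ∧ σ s = σ 1} :=
    ⟨by omega, le_refl 1, hb, rfl⟩
  refine le_antisymm (Nat.sInf_le h1) ?_
  exact le_trans (le_max_left _ _) (Nat.sInf_mem ⟨1, h1⟩).1

end ADV2

section ADV3

variable (Z k : ℕ) (Alg : List ℕ → Finset ℕ)

lemma pD_eq (σ : ℕ → ℕ) (b : ℕ → Bool) (t s0 : ℕ)
    (hmem : s0 ∈ {s | max 1 (t+1-Z) ≤ s ∧ s ≤ t ∧ b s = false ∧ σ s = σ t})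
    (hlb : ∀ x, max 1 (t+1-Z) ≤ x → x ≤ t → b x = false → σ x = σ t → s0 ≤ x) :
    pD Z σ b t = s0 := by
  refine le_antisymm (Nat.sInf_le hmem) ?_
  obtain ⟨h1, h2, h3, h4⟩ := Nat.sInf_mem (⟨s0, hmem⟩ :
    Set.Nonempty {s | max 1 (t+1-Z) ≤ s ∧ s ≤ t ∧ b s = false ∧ σ s = σ t})
  exact hlb _ h1 h2 h3 h4

lemma pD_burst (hAlg : OnlineValid Z k Alg) (hZ : 1 ≤ Z) {j i : ℕ} (hj : j < k) (hi : i < Z) :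
    pD Z (advσ Z k Alg) (algHit (advσ Z k Alg) Alg) (Z+2+2*Z*j+i) = Z+2+2*Z*j := by
  have hb0 : algHit (advσ Z k Alg) Alg (Z+2+2*Z*j) = false := by
    have := algHit_burst Z k Alg hAlg hZ hj (show 0 < Z by omega)
    simpa using this
  have hσ0 : advσ Z k Alg (Z+2+2*Z*j) = itm Z k Alg j := by
    have := advσ_burst Z k Alg hj (show 0 < Z by omega); simpa using this
  have hσt : advσ Z k Alg (Z+2+2*Z*j+i) = itm Z k Alg j := advσ_burst Z k Alg hj hi
  apply pD_eq
  · exact ⟨by omega, by omega, hb0, by rw [hσ0, hσt]⟩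
  · intro x h1 h2 h3 h4
    by_contra hlt
    push_neg at hlt
    have hσx : advσ Z k Alg x = 0 :=
      advσ_gap Z k Alg hZ hj (by omega) (by omega)
    rw [h4, hσt] at hσx
    exact itm_ne_zero Z k Alg hAlg j hσx

lemma gauss (n : ℕ) : 2 * ∑ i ∈ Finset.range n, (n - i) = n * (n+1) := by
  induction n with
  | zero => simp
  | succ n ih =>
    rw [Finset.sum_range_succ]
    have h : ∑ i ∈ Finset.range n, (n+1-i) = (∑ i ∈ Finset.range n, (n-i)) + n := by
      calc ∑ i ∈ Finset.range n, (n+1-i) = ∑ i ∈ Finset.range n, ((n-i)+1) :=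
            Finset.sum_congr rfl (fun i hi => by simp only [Finset.mem_range] at hi; omega)
        _ = (∑ i ∈ Finset.range n, (n-i)) + n := by rw [Finset.sum_add_distrib]; simp
    rw [h, show n+1-n = 1 by omega]
    nlinarith [ih]

lemma algf_one (hAlg : OnlineValid Z k Alg) (hZ : 1 ≤ Z) :
    (if advσ Z k Alg 1 = 0 ∨ algHit (advσ Z k Alg) Alg 1 then 0
      else Z - (1 - pD Z (advσ Z k Alg) (algHit (advσ Z k Alg) Alg) 1)) = Z := by
  have hb : algHit (advσ Z k Alg) Alg 1 = false := by
    unfold algHit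
    have h0 : prefList (advσ Z k Alg) (1-1) = [] := by simp [prefList]
    rw [h0, hAlg.1, advσ_one]
    simp [Finset.mem_Icc]
  rw [advσ_one, pD_one Z _ _ hZ hb, hb]
  simp

lemma latAlg_ge (hAlg : OnlineValid Z k Alg) (hZ : 1 ≤ Z) (hk : 1 ≤ k) :
    Z + k * (∑ i ∈ Finset.range Z, (Z - i)) ≤
      latN Z (Z + 1 + 2*Z*k) (advσ Z k Alg) (algHit (advσ Z k Alg) Alg) := by
  classical
  have hexp : ∀ j : ℕ, 2*Z*(j+1) = 2*Z*j + 2*Z := fun j => by ring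
  set σ := advσ Z k Alg with hσdef
  set b := algHit (advσ Z k Alg) Alg with hbdef
  set B : Finset ℕ := insert 1 ((Finset.range k).biUnion
    (fun j => Finset.Icc (Z+2+2*Z*j) (Z+1+2*Z*j+Z))) with hBdef
  have hBsub : B ⊆ Finset.Icc 1 (Z+1+2*Z*k) := by
    intro t ht
    simp only [hBdef, Finset.mem_insert, Finset.mem_biUnion, Finset.mem_range,
      Finset.mem_Icc] at ht ⊢
    rcases ht with rfl | ⟨j, hj, h1, h2⟩
    · exact ⟨le_refl 1, by omega⟩
    · have h3 := Nat.mul_le_mul_left (2*Z) (show j+1 ≤ k by omega)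
      have h4 := hexp j
      exact ⟨by omega, by omega⟩
  have h1notin : (1 : ℕ) ∉ (Finset.range k).biUnion
      (fun j => Finset.Icc (Z+2+2*Z*j) (Z+1+2*Z*j+Z)) := by
    simp only [Finset.mem_biUnion, Finset.mem_range, Finset.mem_Icc, not_exists]
    intro j hj
    omega
  have hdisj : (↑(Finset.range k) : Set ℕ).PairwiseDisjoint
      (fun j => Finset.Icc (Z+2+2*Z*j) (Z+1+2*Z*j+Z)) := by
    have key : ∀ x y : ℕ, x < y → Disjoint (Finset.Icc (Z+2+2*Z*x) (Z+1+2*Z*x+Z))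
        (Finset.Icc (Z+2+2*Z*y) (Z+1+2*Z*y+Z)) := by
      intro x y hxy
      rw [Finset.disjoint_left]
      intro t ht1 ht2
      simp only [Finset.mem_Icc] at ht1 ht2
      have h1 : 2*Z*(x+1) ≤ 2*Z*y := Nat.mul_le_mul_left _ (by omega)
      have h2 := hexp x
      omega
    intro a _ c _ hac
    rcases Nat.lt_or_ge a c with h | h
    · exact key a c h
    · exact (key c a (by omega)).symm
  unfold latN
  refine le_trans ?_ (Finset.sum_le_sum_of_subset hBsub)
  rw [hBdef, Finset.sum_insert h1notin, Finset.sum_biUnion hdisj]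
  have hinner : ∀ j ∈ Finset.range k,
      (∑ t ∈ Finset.Icc (Z+2+2*Z*j) (Z+1+2*Z*j+Z),
        if σ t = 0 ∨ b t then 0 else Z - (t - pD Z σ b t))
      = ∑ i ∈ Finset.range Z, (Z - i) := by
    intro j hj
    rw [Finset.mem_range] at hj
    rw [show Finset.Icc (Z+2+2*Z*j) (Z+1+2*Z*j+Z)
        = Finset.Ico (Z+2+2*Z*j) ((Z+2+2*Z*j)+Z) by
      rw [← Finset.Ico_add_one_right_eq_Icc]; congr 1; omega]
    rw [Finset.sum_Ico_eq_sum_range]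
    rw [show (Z+2+2*Z*j)+Z - (Z+2+2*Z*j) = Z by omega]
    refine Finset.sum_congr rfl ?_
    intro i hi
    rw [Finset.mem_range] at hi
    have hσt : σ (Z+2+2*Z*j+i) = itm Z k Alg j := advσ_burst Z k Alg hj hi
    have hbt : b (Z+2+2*Z*j+i) = false := algHit_burst Z k Alg hAlg hZ hj hi
    have hpd : pD Z σ b (Z+2+2*Z*j+i) = Z+2+2*Z*j := pD_burst Z k Alg hAlg hZ hj hi
    rw [if_neg (by rw [hσt, hbt]; simp [itm_ne_zero Z k Alg hAlg j]), hpd]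
    omega
  rw [Finset.sum_congr rfl hinner, Finset.sum_const, Finset.card_range, smul_eq_mul,
    algf_one Z k Alg hAlg hZ]

end ADV3

section ADV4

variable (Z k : ℕ) (Alg : List ℕ → Finset ℕ)

lemma OPT_eq (hAlg : OnlineValid Z k Alg) (hZ : 1 ≤ Z) (hk : 1 ≤ k) :
    OPT Z k (Z+1+2*Z*k) (advσ Z k Alg) = Z := by
  classical
  obtain ⟨x, hx, hxU⟩ : ∃ x ∈ Finset.Icc 1 (k+1),
      x ∉ (Finset.range k).image (itm Z k Alg) := by
    by_contra h'
    push_neg at h'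
    have h1 := Finset.card_le_card h'
    have h2 := Finset.card_image_le (s := Finset.range k) (f := itm Z k Alg)
    simp only [Nat.card_Icc, Finset.card_range] at h1 h2
    omega
  set σ := advσ Z k Alg with hσdef
  set T := Z+1+2*Z*k with hT
  set D := (Finset.Icc 1 (k+1)).erase x with hD
  set C : ℕ → Finset ℕ := fun t => if t < Z then Finset.Icc 1 k else D with hC
  have hσ1 : σ 1 = k+1 := advσ_one Z k Alg
  have hitmD : ∀ j, j < k → itm Z k Alg j ∈ D := by
    intro j hj
    rw [hD, Finset.mem_erase]
    refine ⟨fun he => hxU (Finset.mem_image.2 ⟨j, Finset.mem_range.2 hj, he⟩), ?_⟩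
    exact (itm_mem Z k Alg hAlg j).1
  have hburst : ∀ t, 2 ≤ t → σ t ≠ 0 → σ t ∈ D ∧ Z + 2 ≤ t := by
    intro t ht hne
    rcases advσ_ne_zero Z k Alg (by omega) hne with h1 | ⟨j, hj, h1, h2⟩
    · exfalso; omega
    · have hσt : σ t = itm Z k Alg j := by
        have := advσ_burst Z k Alg hj (i := t - (Z+2+2*Z*j)) (by omega)
        rwa [show Z+2+2*Z*j + (t - (Z+2+2*Z*j)) = t by omega] at this
      exact ⟨hσt ▸ hitmD j hj, by omega⟩
  have hsched : IsSchedule Z k σ C := by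
    refine ⟨?_, ?_, ?_⟩
    · show (if 0 < Z then Finset.Icc 1 k else D) = Finset.Icc 1 k
      rw [if_pos (by omega)]
    · intro t
      by_cases h : t < Z
      · simp only [hC]; rw [if_pos h]; simp [Nat.card_Icc]
      · simp only [hC]; rw [if_neg h, hD, Finset.card_erase_of_mem hx]
        simp [Nat.card_Icc]
    · intro t ht
      by_cases hcond : Z ≤ t ∧ σ (t + 1 - Z) ≠ 0 ∧ σ (t + 1 - Z) ∉ C (t - Z)
      · rw [if_pos hcond]
        have htZ : t = Z := by
          by_contra hne
          have htgt : Z < t := by omega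
          obtain ⟨hmem, hge⟩ := hburst (t+1-Z) (by omega) hcond.2.1
          have hCtZ : C (t - Z) = D := by
            simp only [hC]; rw [if_neg (by omega)]
          exact hcond.2.2 (hCtZ ▸ hmem)
        rw [htZ]
        have h1 : C Z = D := by simp only [hC]; rw [if_neg (by omega)]
        have h2 : C (Z-1) = Finset.Icc 1 k := by simp only [hC]; rw [if_pos (by omega)]
        rw [h1, h2]
        intro y hy
        rw [hD, Finset.mem_erase, Finset.mem_Icc] at hy
        have hσZ : σ (Z + 1 - Z) = k+1 := by
          rw [show Z + 1 - Z = 1 by omega]; exact hσ1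
        rw [Finset.mem_union, Finset.mem_Icc, hσZ, Finset.mem_singleton]
        omega
      · rw [if_neg hcond]
        have htZ : t ≠ Z := by
          intro he
          apply hcond
          rw [he]
          refine ⟨le_refl Z, ?_, ?_⟩
          · rw [show Z + 1 - Z = 1 by omega, hσ1]; omega
          · rw [show Z + 1 - Z = 1 by omega, hσ1]
            simp only [hC]
            rw [if_pos (by omega), Finset.mem_Icc]
            omega
        by_cases hlt : t < Z
        · simp only [hC]; rw [if_pos hlt, if_pos (by omega)]
        · simp only [hC]; rw [if_neg hlt, if_neg (by omega)]
  have hC0 : C (1 - 1) = Finset.Icc 1 k := by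
    simp only [hC]; rw [if_pos (show (1:ℕ)-1 < Z by omega)]
  have hhit1 : hitOf σ C 1 = false := by
    unfold hitOf
    rw [hC0, hσ1]
    simp [Finset.mem_Icc]
  have hlatC : latN Z T σ (hitOf σ C) = Z := by
    unfold latN
    rw [Finset.sum_eq_single_of_mem 1 (Finset.mem_Icc.2 ⟨le_refl 1, by omega⟩) ?_]
    · rw [if_neg (by rw [hσ1, hhit1]; simp), pD_one Z σ _ hZ hhit1]
      omega
    · intro t htm hne
      rw [Finset.mem_Icc] at htm
      by_cases hσ0 : σ t = 0
      · rw [if_pos (Or.inl hσ0)]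
      · obtain ⟨hmem, hge⟩ := hburst t (by omega) hσ0
        have hCt : C (t-1) = D := by simp only [hC]; rw [if_neg (by omega)]
        have hhit : hitOf σ C t = true := by
          unfold hitOf; rw [hCt]; simpa using hmem
        rw [if_pos (Or.inr hhit)]
  have hmemS : Z ∈ {L | ∃ C', IsSchedule Z k σ C' ∧ latN Z T σ (hitOf σ C') = L} :=
    ⟨C, hsched, hlatC⟩
  unfold OPT
  refine le_antisymm (Nat.sInf_le hmemS) ?_
  obtain ⟨C', hC', hlat'⟩ := Nat.sInf_mem (⟨Z, hmemS⟩ :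
    Set.Nonempty {L | ∃ C', IsSchedule Z k σ C' ∧ latN Z T σ (hitOf σ C') = L})
  rw [← hlat']
  have hhit1' : hitOf σ C' 1 = false := by
    unfold hitOf
    have hC0' : C' (1 - 1) = Finset.Icc 1 k := hC'.1
    rw [hC0', hσ1]
    simp [Finset.mem_Icc]
  unfold latN
  refine le_trans ?_ (Finset.single_le_sum
    (f := fun t => if σ t = 0 ∨ hitOf σ C' t then 0 else Z - (t - pD Z σ (hitOf σ C') t))
    (fun _ _ => Nat.zero_le _) (Finset.mem_Icc.2 ⟨le_refl 1, by omega⟩))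
  show Z ≤ ite (σ 1 = 0 ∨ hitOf σ C' 1 = true) 0 (Z - (1 - pD Z σ (hitOf σ C') 1))
  rw [if_neg (by rw [hσ1, hhit1']; simp), pD_one Z σ _ hZ hhit1']
  omega

end ADV4

/-- Any deterministic online algorithm for delayed hits with cache size `k`
and delay `Z` has competitive ratio at least `1 + k(Z+1)/2 = Ω(kZ)`: there is
a request sequence on which its latency is at least `(1 + k(Z+1)/2)` times
the (positive) optimal offline latency. -/
theorem competitive_ratio_lower_bound (Z k : ℕ) (hZ : 1 ≤ Z) (hk : 1 ≤ k)
    (Alg : List ℕ → Finset ℕ) (hAlg : OnlineValid Z k Alg) :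
    ∃ (T : ℕ) (σ : ℕ → ℕ), 0 < OPT Z k T σ ∧
      ((1 : ℚ) + k * (Z + 1) / 2) * (OPT Z k T σ : ℚ)
        ≤ (latN Z T σ (algHit σ Alg) : ℚ) := by
  refine ⟨Z+1+2*Z*k, advσ Z k Alg, ?_, ?_⟩
  · rw [OPT_eq Z k Alg hAlg hZ hk]; omega
  · rw [OPT_eq Z k Alg hAlg hZ hk]
    have hlat := latAlg_ge Z k Alg hAlg hZ hk
    have hg := gauss Z
    set G := ∑ i ∈ Finset.range Z, (Z - i) with hG
    have hlatQ : (Z : ℚ) + k * G ≤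
        (latN Z (Z+1+2*Z*k) (advσ Z k Alg) (algHit (advσ Z k Alg) Alg) : ℚ) := by
      exact_mod_cast hlat
    have hgQ : (2 : ℚ) * G = Z * (Z+1) := by exact_mod_cast hg
    have h5 : (k : ℚ) * (2 * G) = k * (Z * (Z+1)) := by rw [hgQ]
    nlinarith [hlatQ, h5]
end

section
/- In the adversarial construction against a deterministic online algorithm, the optimal offline latency on the constructed sequence σ_A equals exactly Z: every algorithm misses the first pure request (cost Z), and there exists an item j ∈ {1,...,k+1} never requested in any bursty request, so the offline algorithm caching {1,...,k+1} \ {j} after the first fetch incurs no further misses. -/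
/-- A pure request for item `i`: `Z` idle steps, one request for `i`, `Z` idle
steps. -/
def pureBlock (Z i : ℕ) : List ℕ :=
  List.replicate Z 0 ++ [i] ++ List.replicate Z 0

/-- A bursty request for item `i`: `Z` idle steps, `Z` requests for `i`, `Z`
idle steps. -/
def burstyBlock (Z i : ℕ) : List ℕ :=
  List.replicate Z 0 ++ List.replicate Z i ++ List.replicate Z 0

/-- The request sequence (as a function of time, times starting at `1`)
encoded by a list. -/
def seqOf (l : List ℕ) : ℕ → ℕ := fun t => l.getD (t - 1) 0

lemma seqOf_pure (Z i : ℕ) (hZ : 1 ≤ Z) (l : List ℕ) (t : ℕ) (ht : t ≤ 2*Z+1) :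
    seqOf (pureBlock Z i ++ l) t = if t = Z + 1 then i else 0 := by
  unfold seqOf pureBlock
  rw [List.getD_eq_getElem?_getD]
  simp only [List.append_assoc, List.getElem?_append, List.getElem?_replicate,
    List.length_replicate, List.length_singleton, List.length_cons, List.length_nil,
    List.getElem?_cons, List.getElem?_nil]
  split_ifs <;> simp_all <;> omega

lemma seqOf_tail {Z i : ℕ} {l : List ℕ} {t : ℕ} (ht : 2*Z+1 < t)
    (h0 : seqOf (pureBlock Z i ++ l) t ≠ 0) : seqOf (pureBlock Z i ++ l) t ∈ l := by
  have hlen : (pureBlock Z i).length = 2*Z+1 := by simp [pureBlock]; omega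
  unfold seqOf at h0 ⊢
  rw [List.getD_eq_getElem?_getD, List.getElem?_append_right (by omega)] at h0 ⊢
  cases h : l[t - 1 - (pureBlock Z i).length]? with
  | none => rw [h] at h0; simp at h0
  | some x =>
    simp only [Option.getD_some]
    obtain ⟨hn, rfl⟩ := List.getElem?_eq_some_iff.mp h
    exact List.getElem_mem hn

lemma mem_bursty_flatten {Z : ℕ} {B : List ℕ} {x : ℕ}
    (hx : x ∈ (B.map (burstyBlock Z)).flatten) : x = 0 ∨ x ∈ B := by
  rw [List.mem_flatten] at hx
  obtain ⟨m, hm, hxm⟩ := hx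
  rw [List.mem_map] at hm
  obtain ⟨i, hi, rfl⟩ := hm
  unfold burstyBlock at hxm
  simp only [List.mem_append, List.mem_replicate] at hxm
  rcases hxm with (h | h) | h
  · exact Or.inl h.2
  · exact Or.inr (h.2 ▸ hi)
  · exact Or.inl h.2

lemma seq_cases (Z k : ℕ) (hZ : 1 ≤ Z) (B : List ℕ) (t : ℕ)
    (h0 : seqOf (pureBlock Z (k+1) ++ (B.map (burstyBlock Z)).flatten) t ≠ 0) :
    (t = Z + 1 ∧ seqOf (pureBlock Z (k+1) ++ (B.map (burstyBlock Z)).flatten) t = k + 1) ∨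
    (2*Z+1 < t ∧ seqOf (pureBlock Z (k+1) ++ (B.map (burstyBlock Z)).flatten) t ∈ B) := by
  by_cases ht : t ≤ 2*Z+1
  · have hp := seqOf_pure Z (k+1) hZ ((B.map (burstyBlock Z)).flatten) t ht
    by_cases he : t = Z + 1
    · exact Or.inl ⟨he, by rw [hp, if_pos he]⟩
    · exact absurd (by rw [hp, if_neg he]) h0
  · exact Or.inr ⟨by omega,
      (mem_bursty_flatten (seqOf_tail (by omega) h0)).resolve_left h0⟩

lemma seq_at (Z k : ℕ) (hZ : 1 ≤ Z) (B : List ℕ) :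
    seqOf (pureBlock Z (k+1) ++ (B.map (burstyBlock Z)).flatten) (Z+1) = k + 1 := by
  rw [seqOf_pure Z (k+1) hZ _ (Z+1) (by omega), if_pos rfl]

lemma pD_eq_s12 (Z k : ℕ) (hZ : 1 ≤ Z) (B : List ℕ) (b : ℕ → Bool)
    (hb : b (Z+1) = false) :
    pD Z (seqOf (pureBlock Z (k+1) ++ (B.map (burstyBlock Z)).flatten)) b (Z+1) = Z+1 := by
  set σ := seqOf (pureBlock Z (k+1) ++ (B.map (burstyBlock Z)).flatten) with hσ
  have hat : σ (Z+1) = k + 1 := seq_at Z k hZ B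
  unfold pD
  have hset : {s | max 1 (Z + 1 + 1 - Z) ≤ s ∧ s ≤ Z + 1 ∧ b s = false ∧ σ s = σ (Z+1)}
      = {Z+1} := by
    ext s
    simp only [Set.mem_setOf_eq, Set.mem_singleton_iff]
    constructor
    · rintro ⟨h1, h2, h3, h4⟩
      rw [hat] at h4
      rcases seq_cases Z k hZ B s (by show σ s ≠ 0; rw [h4]; omega) with ⟨he, _⟩ | ⟨hgt, _⟩
      · exact he
      · omega
    · rintro rfl
      exact ⟨by omega, le_refl _, hb, rfl⟩
  rw [hset, csInf_singleton]

lemma T_big (Z k : ℕ) (hZ : 1 ≤ Z) (B : List ℕ) :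
    2*Z + 1 ≤ (pureBlock Z (k + 1) ++ (B.map (burstyBlock Z)).flatten).length := by
  rw [List.length_append]
  have : (pureBlock Z (k+1)).length = 2*Z+1 := by simp [pureBlock]; omega
  omega

lemma latN_lower (Z k : ℕ) (hZ : 1 ≤ Z) (B : List ℕ) (C : ℕ → Finset ℕ)
    (hC : IsSchedule Z k (seqOf (pureBlock Z (k+1) ++ (B.map (burstyBlock Z)).flatten)) C) :
    Z ≤ latN Z (pureBlock Z (k + 1) ++ (B.map (burstyBlock Z)).flatten).length
      (seqOf (pureBlock Z (k+1) ++ (B.map (burstyBlock Z)).flatten)) (hitOf (seqOf (pureBlock Z (k+1) ++ (B.map (burstyBlock Z)).flatten)) C) := by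
  set σ := seqOf (pureBlock Z (k+1) ++ (B.map (burstyBlock Z)).flatten) with hσ
  have hone : σ 1 = 0 := by
    rw [hσ, seqOf_pure Z (k+1) hZ _ 1 (by omega), if_neg (by omega)]
  have hCt : ∀ t, t ≤ Z → C t = Finset.Icc 1 k := by
    intro t
    induction t with
    | zero => intro _; exact hC.1
    | succ n ih =>
      intro h
      have hs := hC.2.2 (n+1) (by omega)
      rw [if_neg] at hs
      · rw [hs]; simpa using ih (by omega)
      · rintro ⟨h1, h2, _⟩
        apply h2
        have : n + 1 + 1 - Z = 1 := by omega
        rw [this, hone]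
  have hat : σ (Z+1) = k + 1 := seq_at Z k hZ B
  have hb : hitOf σ C (Z+1) = false := by
    unfold hitOf
    simp only [Nat.add_sub_cancel, hCt Z (le_refl Z), hat]
    simp [Finset.mem_Icc]
  have hterm : (if σ (Z+1) = 0 ∨ hitOf σ C (Z+1) then 0
      else Z - (Z + 1 - pD Z σ (hitOf σ C) (Z+1))) = Z := by
    rw [if_neg (by rw [hb, hat]; simp), hσ, pD_eq_s12 Z k hZ B _ (by rw [← hσ]; exact hb)]
    omega
  unfold latN
  calc Z = (if σ (Z+1) = 0 ∨ hitOf σ C (Z+1) then 0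
      else Z - (Z + 1 - pD Z σ (hitOf σ C) (Z+1))) := hterm.symm
    _ ≤ _ := Finset.single_le_sum (f := fun t => if σ t = 0 ∨ hitOf σ C t then 0
        else Z - (t - pD Z σ (hitOf σ C) t)) (fun _ _ => Nat.zero_le _)
        (Finset.mem_Icc.mpr ⟨by omega, by have := T_big Z k hZ B; omega⟩)

lemma good_schedule (Z k : ℕ) (hZ : 1 ≤ Z) (hk : 1 ≤ k) (B : List ℕ)
    (hmem : ∀ i ∈ B, 1 ≤ i ∧ i ≤ k + 1) (j : ℕ) (hj1 : 1 ≤ j) (hj2 : j ≤ k + 1)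
    (hjB : j ∉ B) :
    ∃ C, IsSchedule Z k (seqOf (pureBlock Z (k+1) ++ (B.map (burstyBlock Z)).flatten)) C ∧
      latN Z (pureBlock Z (k + 1) ++ (B.map (burstyBlock Z)).flatten).length
        (seqOf (pureBlock Z (k+1) ++ (B.map (burstyBlock Z)).flatten))
        (hitOf (seqOf (pureBlock Z (k+1) ++ (B.map (burstyBlock Z)).flatten)) C) = Z := by
  set σ := seqOf (pureBlock Z (k+1) ++ (B.map (burstyBlock Z)).flatten) with hσ
  set C : ℕ → Finset ℕ := fun t => if t < 2*Z then Finset.Icc 1 k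
    else Finset.Icc 1 (k+1) \ {j} with hCdef
  have hat : σ (Z+1) = k + 1 := seq_at Z k hZ B
  have hCsmall : ∀ t, t < 2*Z → C t = Finset.Icc 1 k := fun t h => if_pos h
  have hCbig : ∀ t, 2*Z ≤ t → C t = Finset.Icc 1 (k+1) \ {j} := fun t h => if_neg (by omega)
  have hsched : IsSchedule Z k σ C := by
    refine ⟨hCsmall 0 (by omega), ?_, ?_⟩
    · intro t
      by_cases h : t < 2*Z
      · rw [hCsmall t h, Nat.card_Icc]; omega
      · rw [hCbig t (by omega), Finset.card_sdiff_of_subset (by simp [Finset.mem_Icc]; omega)]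
        simp [Nat.card_Icc]
    · intro t ht
      by_cases h2 : t = 2*Z
      · subst h2
        have he : 2*Z + 1 - Z = Z + 1 := by omega
        rw [if_pos]
        · intro x hx
          rw [hCbig (2*Z) (le_refl _)] at hx
          rw [hCsmall (2*Z-1) (by omega), he, hat]
          simp only [Finset.mem_sdiff, Finset.mem_Icc, Finset.mem_singleton] at hx
          simp only [Finset.mem_union, Finset.mem_Icc, Finset.mem_singleton]
          omega
        · refine ⟨by omega, ?_, ?_⟩
          · rw [he, hat]; omega
          · rw [he, hat, hCsmall (2*Z - Z) (by omega)]
            simp [Finset.mem_Icc]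
      · have hCeq : C t = C (t-1) := by
          rw [hCdef]
          dsimp only
          split_ifs with h h' h' <;> first | rfl | omega
        split_ifs with h
        · rw [hCeq]; exact Finset.subset_union_left
        · exact hCeq
  refine ⟨C, hsched, ?_⟩
  have hb : hitOf σ C (Z+1) = false := by
    unfold hitOf
    simp only [Nat.add_sub_cancel, hCsmall Z (by omega), hat]
    simp [Finset.mem_Icc]
  unfold latN
  rw [Finset.sum_eq_single_of_mem (Z+1)
      (Finset.mem_Icc.mpr ⟨by omega, by have := T_big Z k hZ B; omega⟩)]
  · rw [if_neg (by rw [hb, hat]; simp), hσ, pD_eq_s12 Z k hZ B _ (by rw [← hσ]; exact hb)]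
    omega
  · intro t _ hne
    by_cases h0 : σ t = 0
    · simp [h0]
    · rcases seq_cases Z k hZ B t h0 with ⟨he, _⟩ | ⟨hgt, hB⟩
      · exact absurd he hne
      · have hmemB := hmem _ hB
        have hb2 : hitOf σ C t = true := by
          unfold hitOf
          rw [hCbig (t-1) (by omega)]
          simp only [decide_eq_true_eq, Finset.mem_sdiff, Finset.mem_Icc,
            Finset.mem_singleton]
          refine ⟨⟨hmemB.1, hmemB.2⟩, ?_⟩
          intro hj
          exact hjB (hj ▸ hB)
        simp [hb2]

/-- On the adversarial sequence — a pure request for item `k+1` followed by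
bursty requests for items of `{1,…,k+1}` touching exactly `k` distinct items —
the optimal offline latency is exactly `Z`; moreover (pigeonhole) some item
`j ∈ {1,…,k+1}` is never requested in a bursty request. -/
theorem opt_on_adversarial_sequence (Z k : ℕ) (hZ : 1 ≤ Z) (hk : 1 ≤ k)
    (B : List ℕ) (hmem : ∀ i ∈ B, 1 ≤ i ∧ i ≤ k + 1)
    (hcard : B.toFinset.card = k) :
    OPT Z k (pureBlock Z (k + 1) ++ (B.map (burstyBlock Z)).flatten).length
        (seqOf (pureBlock Z (k + 1) ++ (B.map (burstyBlock Z)).flatten)) = Z ∧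
    ∃ j, 1 ≤ j ∧ j ≤ k + 1 ∧ j ∉ B := by
  have hsub : B.toFinset ⊆ Finset.Icc 1 (k+1) := by
    intro i hi
    exact Finset.mem_Icc.mpr (hmem i (List.mem_toFinset.mp hi))
  have hss : B.toFinset ⊂ Finset.Icc 1 (k+1) := by
    refine hsub.ssubset_of_ne ?_
    intro h
    rw [h, Nat.card_Icc] at hcard
    omega
  obtain ⟨j, hjI, hjB⟩ := Finset.exists_of_ssubset hss
  rw [Finset.mem_Icc] at hjI
  have hjB' : j ∉ B := fun h => hjB (List.mem_toFinset.mpr h)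
  obtain ⟨C, hsched, hlat⟩ := good_schedule Z k hZ hk B hmem j hjI.1 hjI.2 hjB'
  constructor
  · have hmemZ : Z ∈ {L | ∃ C, IsSchedule Z k
        (seqOf (pureBlock Z (k + 1) ++ (B.map (burstyBlock Z)).flatten)) C ∧
        latN Z (pureBlock Z (k + 1) ++ (B.map (burstyBlock Z)).flatten).length
          (seqOf (pureBlock Z (k + 1) ++ (B.map (burstyBlock Z)).flatten))
          (hitOf (seqOf (pureBlock Z (k + 1) ++ (B.map (burstyBlock Z)).flatten)) C) = L} :=
      ⟨C, hsched, hlat⟩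
    refine le_antisymm (Nat.sInf_le hmemZ) (le_csInf ⟨Z, hmemZ⟩ ?_)
    rintro L ⟨C', hC', rfl⟩
    exact latN_lower Z k hZ B C' hC'
  · exact ⟨j, hjI.1, hjI.2, hjB'⟩
end

section
/- A pure or bursty request block is 'isolated': if the first request of the block is a cache hit then every request in the block incurs latency 0, and if the first request is a miss then a pure request incurs total latency Z and a bursty request incurs total latency Z(Z+1)/2. -/
/-- Isolation of pure/bursty blocks.  Suppose `σ` contains a block
`(0^Z, i^m, 0^Z)` starting at time `t0` (so the `m` requests for `i ≠ 0` sit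
at times `t0+Z, …, t0+Z+m-1`), where `m = 1` (a pure request) or `m = Z`
(a bursty request).  In any execution: if the first request of the block hits
then every request of the block hits and the block's latency is `0`; if the
first request misses then the block's latency is `Z` for a pure request and
`Z(Z+1)/2` for a bursty request. -/
theorem block_isolation (Z k m t0 i : ℕ) (hZ : 1 ≤ Z) (ht0 : 1 ≤ t0)
    (hi : i ≠ 0) (hm : m = 1 ∨ m = Z) (σ : ℕ → ℕ) (C : ℕ → Finset ℕ)
    (hC : IsSchedule Z k σ C)
    (hidle1 : ∀ t, t0 ≤ t → t < t0 + Z → σ t = 0)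
    (hblock : ∀ t, t0 + Z ≤ t → t < t0 + Z + m → σ t = i)
    (hidle2 : ∀ t, t0 + Z + m ≤ t → t < t0 + 2 * Z + m → σ t = 0) :
    (hitOf σ C (t0 + Z) = true →
      (∀ t, t0 + Z ≤ t → t < t0 + Z + m → hitOf σ C t = true) ∧
      (∑ t ∈ Finset.Icc (t0 + Z) (t0 + Z + m - 1),
        if σ t = 0 ∨ hitOf σ C t then 0
        else Z - (t - pD Z σ (hitOf σ C) t)) = 0) ∧
    (hitOf σ C (t0 + Z) = false →
      (∑ t ∈ Finset.Icc (t0 + Z) (t0 + Z + m - 1),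
        if σ t = 0 ∨ hitOf σ C t then 0
        else Z - (t - pD Z σ (hitOf σ C) t))
      = if m = 1 then Z else Z * (Z + 1) / 2) := by
  have hm1 : 1 ≤ m := by rcases hm with h|h <;> omega
  have hmZ : m ≤ Z := by rcases hm with h|h <;> omega
  set a := t0 + Z with ha
  have hconst : ∀ t, a ≤ t → t + 1 < a + m → C t = C (t - 1) := by
    intro t h1 h2
    have h3 := hC.2.2 t (by omega)
    have hσ : σ (t + 1 - Z) = 0 := hidle1 _ (by omega) (by omega)
    rw [if_neg] at h3
    · exact h3
    · rintro ⟨_, h, _⟩; exact h hσ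
  have hcache : ∀ j, j < m → C (a - 1 + j) = C (a - 1) := by
    intro j hj
    induction j with
    | zero => rfl
    | succ j ih =>
      have hc := hconst (a + j) (by omega) (by omega)
      rw [show a - 1 + (j + 1) = a + j from by omega, hc,
        show a + j - 1 = a - 1 + j from by omega]
      exact ih (by omega)
  have hhit : ∀ t, a ≤ t → t < a + m → hitOf σ C t = hitOf σ C a := by
    intro t h1 h2
    unfold hitOf
    rw [hblock t h1 h2, hblock a le_rfl (by omega)]
    have hcc := hcache (t - a) (by omega)
    rw [show t - 1 = a - 1 + (t - a) from by omega, hcc]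
  constructor
  · intro hh
    constructor
    · intro t h1 h2; rw [hhit t h1 h2]; exact hh
    · apply Finset.sum_eq_zero
      intro t ht
      simp only [Finset.mem_Icc] at ht
      rw [if_pos]
      right
      rw [hhit t ht.1 (by omega)]; exact hh
  · intro hh
    have hmiss : ∀ t, a ≤ t → t < a + m → hitOf σ C t = false := by
      intro t h1 h2; rw [hhit t h1 h2]; exact hh
    have hpd : ∀ t, a ≤ t → t < a + m → pD Z σ (hitOf σ C) t = a := by
      intro t h1 h2
      have hmem : a ∈ {s | max 1 (t + 1 - Z) ≤ s ∧ s ≤ t ∧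
          hitOf σ C s = false ∧ σ s = σ t} := by
        refine ⟨by omega, h1, hmiss a le_rfl (by omega), ?_⟩
        rw [hblock a le_rfl (by omega), hblock t h1 h2]
      unfold pD
      apply le_antisymm (Nat.sInf_le hmem)
      by_contra hlt
      push_neg at hlt
      obtain ⟨hs1, hs2, hs3, hs4⟩ := Nat.sInf_mem (⟨a, hmem⟩ : Set.Nonempty _)
      have h5 : σ (sInf {s | max 1 (t + 1 - Z) ≤ s ∧ s ≤ t ∧
          hitOf σ C s = false ∧ σ s = σ t}) = 0 :=
        hidle1 _ (by omega) (by omega)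
      rw [hs4, hblock t h1 h2] at h5
      exact hi h5
    have hstep : ∑ t ∈ Finset.Icc a (a + m - 1),
        (if σ t = 0 ∨ hitOf σ C t then 0 else Z - (t - pD Z σ (hitOf σ C) t))
        = ∑ t ∈ Finset.Icc a (a + m - 1), (Z - (t - a)) := by
      apply Finset.sum_congr rfl
      intro t ht
      simp only [Finset.mem_Icc] at ht
      have h2 : t < a + m := by omega
      rw [hpd t ht.1 h2, if_neg]
      rintro (h | h)
      · exact hi (hblock t ht.1 h2 ▸ h)
      · rw [hmiss t ht.1 h2] at h; exact absurd h (by simp)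
    rw [hstep, show Finset.Icc a (a + m - 1) = Finset.Ico a (a + m) from by
      rw [← Finset.Ico_add_one_right_eq_Icc]; congr 1; omega,
      Finset.sum_Ico_eq_sum_range, Nat.add_sub_cancel_left]
    have hsimp : ∑ j ∈ Finset.range m, (Z - (a + j - a)) = ∑ j ∈ Finset.range m, (Z - j) := by
      apply Finset.sum_congr rfl; intro j _; rw [Nat.add_sub_cancel_left]
    rw [hsimp]
    rcases hm with rfl | rfl
    · simp
    · have h1 : ∑ j ∈ Finset.range m, (m - j) = ∑ j ∈ Finset.range (m + 1), (m - j) := by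
        rw [Finset.sum_range_succ]; simp
      have h2 : ∑ j ∈ Finset.range (m + 1), (m - j) = ∑ j ∈ Finset.range (m + 1), j := by
        have h := Finset.sum_range_reflect (fun j => j) (m + 1)
        simpa using h
      rw [h1, h2, Finset.sum_range_id]
      rcases Nat.eq_or_lt_of_le hZ with hZ1 | hZ1
      · simp [← hZ1]
      · rw [if_neg (by omega)]
        rw [Nat.add_sub_cancel, Nat.mul_comm]
end

section
/- On the modified request sequence σ' (with k = 1: request item 2 at time 1, item 3 at time 2, item 2 at time Z+1 and at times 2Z-z+1..2Z with z = ⌊Z/2⌋, and item 3 at times 3Z+1..4Z), for Z ≥ 5 the hit vector b with a miss at time Z+1 achieves strictly lower delayed-hits latency than the hit vector b' identical to b except with a hit at time Z+1, and b achieves the minimum latency over all feasible hit vectors. -/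
/-- triangular numbers -/
def G (n : ℕ) : ℕ := ∑ i ∈ Finset.range n, (i + 1)

lemma G_succ (n : ℕ) : G (n + 1) = G n + (n + 1) := Finset.sum_range_succ _ _

lemma G_zero : G 0 = 0 := rfl

lemma G_mono : Monotone G := by
  intro a b hab
  exact Finset.sum_le_sum_of_subset (Finset.range_subset_range.2 hab)

lemma G_add (m n : ℕ) : G (m + n) = G m + G n + m * n := by
  induction n with
  | zero => simp [G_zero]
  | succ k ih =>
    have : m + (k + 1) = (m + k) + 1 := by omega
    rw [this, G_succ, ih, G_succ]; ring

lemma sum_Ioc_sub (c : ℕ) : ∀ (b a : ℕ), a ≤ b → b ≤ c →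
    ∑ t ∈ Finset.Ioc a b, (c + 1 - t) = G (c - a) - G (c - b) := by
  intro b
  induction b with
  | zero => intro a ha _; interval_cases a; simp
  | succ n ih =>
    intro a ha hc
    rcases Nat.eq_or_lt_of_le ha with h | h
    · simp [← h]
    · have h1 : a ≤ n := by omega
      rw [← Finset.sum_Ioc_consecutive _ h1 (Nat.le_succ n), ih a h1 (by omega),
        Nat.Ioc_succ_singleton, Finset.sum_singleton]
      have e1 : c - n = (c - (n+1)) + 1 := by omega
      have e2 : G (c - n) ≤ G (c - a) := G_mono (by omega)
      have e3 := G_succ (c - (n+1))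
      rw [e1] at e2 ⊢
      omega

lemma pD_eq_of (Z : ℕ) (σ : ℕ → ℕ) (b : ℕ → Bool) (t s₀ : ℕ)
    (h1 : max 1 (t + 1 - Z) ≤ s₀) (h2 : s₀ ≤ t) (h3 : b s₀ = false) (h4 : σ s₀ = σ t)
    (hmin : ∀ s, max 1 (t + 1 - Z) ≤ s → s ≤ t → b s = false → σ s = σ t → s₀ ≤ s) :
    pD Z σ b t = s₀ := by
  have hmem : s₀ ∈ {s | max 1 (t + 1 - Z) ≤ s ∧ s ≤ t ∧ b s = false ∧ σ s = σ t} :=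
    ⟨h1, h2, h3, h4⟩
  refine le_antisymm (Nat.sInf_le hmem) ?_
  have hm := Nat.sInf_mem (⟨s₀, hmem⟩ :
    Set.Nonempty {s | max 1 (t + 1 - Z) ≤ s ∧ s ≤ t ∧ b s = false ∧ σ s = σ t})
  exact hmin _ hm.1 hm.2.1 hm.2.2.1 hm.2.2.2

/-- the modified sequence -/
def sig (Z : ℕ) : ℕ → ℕ := fun t =>
  if t = 1 then 2 else if t = 2 then 3 else if t = Z + 1 then 2
  else if 2 * Z - Z / 2 + 1 ≤ t ∧ t ≤ 2 * Z then 2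
  else if 3 * Z + 1 ≤ t ∧ t ≤ 4 * Z then 3 else 0

lemma sig_one (Z : ℕ) : sig Z 1 = 2 := by simp [sig]

lemma sig_two (Z : ℕ) (hZ : 5 ≤ Z) : sig Z 2 = 3 := by
  simp only [sig]; split_ifs <;> first | omega | (rw [false_iff]; omega)

lemma sig_Zsucc (Z : ℕ) (hZ : 5 ≤ Z) : sig Z (Z + 1) = 2 := by
  simp only [sig]; split_ifs <;> first | omega | (rw [false_iff]; omega)

lemma sig_burst (Z t : ℕ) (hZ : 5 ≤ Z) (h1 : 2 * Z - Z / 2 + 1 ≤ t) (h2 : t ≤ 2 * Z) :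
    sig Z t = 2 := by
  simp only [sig]; split_ifs <;> first | omega | (rw [false_iff]; omega)

lemma sig_tail (Z t : ℕ) (hZ : 5 ≤ Z) (h1 : 3 * Z + 1 ≤ t) (h2 : t ≤ 4 * Z) :
    sig Z t = 3 := by
  simp only [sig]; split_ifs <;> first | omega | (rw [false_iff]; omega)

lemma sig_zero (Z t : ℕ) (hZ : 5 ≤ Z) (h1 : t ≠ 1) (h2 : t ≠ 2) (h3 : t ≠ Z + 1)
    (h4 : ¬(2 * Z - Z / 2 + 1 ≤ t ∧ t ≤ 2 * Z)) (h5 : ¬(3 * Z + 1 ≤ t ∧ t ≤ 4 * Z)) :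
    sig Z t = 0 := by
  simp only [sig]; split_ifs <;> first | omega | (rw [false_iff]; omega)

lemma sig_eq_two_iff (Z s : ℕ) (hZ : 5 ≤ Z) :
    sig Z s = 2 ↔ s = 1 ∨ s = Z + 1 ∨ (2 * Z - Z / 2 + 1 ≤ s ∧ s ≤ 2 * Z) := by
  simp only [sig]; split_ifs <;> first | omega | (rw [false_iff]; omega)

lemma sig_eq_three_iff (Z s : ℕ) (hZ : 5 ≤ Z) :
    sig Z s = 3 ↔ s = 2 ∨ (3 * Z + 1 ≤ s ∧ s ≤ 4 * Z) := by
  simp only [sig]; split_ifs <;> first | omega | (rw [false_iff]; omega)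
lemma pD_eq_of' (Z : ℕ) (σ : ℕ → ℕ) (b : ℕ → Bool) (t s₀ : ℕ)
    (h0 : 1 ≤ s₀) (h1 : t + 1 - Z ≤ s₀) (h2 : s₀ ≤ t) (h3 : b s₀ = false) (h4 : σ s₀ = σ t)
    (hmin : ∀ s, 1 ≤ s → t + 1 - Z ≤ s → s ≤ t → b s = false → σ s = σ t → s₀ ≤ s) :
    pD Z σ b t = s₀ := by
  apply pD_eq_of Z σ b t s₀ (max_le h0 h1) h2 h3 h4
  intro s hs1 hs2 hs3 hs4
  exact hmin s (le_trans (le_max_left _ _) hs1) (le_trans (le_max_right _ _) hs1) hs2 hs3 hs4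

lemma master (Z : ℕ) (hZ : 5 ≤ Z) (h : ℕ → Bool) (p q r : Bool)
    (h1 : h 1 = false) (h2 : h 2 = false) (hp : h (Z + 1) = p)
    (hq : ∀ t, 2 * Z - Z / 2 + 1 ≤ t → t ≤ 2 * Z → h t = q)
    (hr : ∀ t, 3 * Z + 1 ≤ t → t ≤ 4 * Z → h t = r) :
    latN Z (4 * Z) (sig Z) h =
      2 * Z + (if p then 0 else Z)
        + (if q then 0 else if p then G Z - G (Z - Z / 2) else G (Z / 2))
        + (if r then 0 else G Z) := by
  unfold latN
  rw [show Finset.Icc 1 (4*Z) = Finset.Ioc 0 (4*Z) by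
        ext x; simp only [Finset.mem_Icc, Finset.mem_Ioc]; omega]
  rw [← Finset.sum_Ioc_consecutive _ (show (0:ℕ) ≤ 3*Z by omega) (show 3*Z ≤ 4*Z by omega),
      ← Finset.sum_Ioc_consecutive _ (show (0:ℕ) ≤ 2*Z by omega) (show 2*Z ≤ 3*Z by omega),
      ← Finset.sum_Ioc_consecutive _ (show (0:ℕ) ≤ 2*Z - Z/2 by omega)
          (show 2*Z - Z/2 ≤ 2*Z by omega),
      ← Finset.sum_Ioc_consecutive _ (show (0:ℕ) ≤ Z+1 by omega)
          (show Z+1 ≤ 2*Z - Z/2 by omega),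
      ← Finset.sum_Ioc_consecutive _ (show (0:ℕ) ≤ Z by omega) (show Z ≤ Z+1 by omega),
      ← Finset.sum_Ioc_consecutive _ (show (0:ℕ) ≤ 2 by omega) (show 2 ≤ Z by omega)]
  have e1 : ∑ t ∈ Finset.Ioc 0 2,
      (if sig Z t = 0 ∨ h t then 0 else Z - (t - pD Z (sig Z) h t)) = Z + Z := by
    have hIoc : Finset.Ioc 0 2 = {1, 2} := by decide
    have pd1 : pD Z (sig Z) h 1 = 1 :=
      pD_eq_of' Z (sig Z) h 1 1 (by omega) (by omega) (by omega) h1 rfl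
        (fun s hs0 _ _ _ _ => hs0)
    have pd2 : pD Z (sig Z) h 2 = 2 := by
      apply pD_eq_of' Z (sig Z) h 2 2 (by omega) (by omega) (by omega) h2 rfl
      intro s hs0 hs1 hs2 hs3 hss
      rw [sig_two Z hZ] at hss
      have := (sig_eq_three_iff Z s hZ).1 hss
      omega
    rw [hIoc, Finset.sum_pair (by norm_num : (1:ℕ) ≠ 2), pd1, pd2,
      sig_one, sig_two Z hZ, h1, h2]
    norm_num
  have e2 : ∑ t ∈ Finset.Ioc 2 Z,
      (if sig Z t = 0 ∨ h t then 0 else Z - (t - pD Z (sig Z) h t)) = 0 := by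
    refine Finset.sum_eq_zero fun t ht => ?_
    rw [Finset.mem_Ioc] at ht
    rw [sig_zero Z t hZ (by omega) (by omega) (by omega) (by omega) (by omega)]
    simp
  have e3 : ∑ t ∈ Finset.Ioc Z (Z+1),
      (if sig Z t = 0 ∨ h t then 0 else Z - (t - pD Z (sig Z) h t)) =
      (if p then 0 else Z) := by
    rw [Nat.Ioc_succ_singleton, Finset.sum_singleton]
    cases p with
    | true => simp [hp]
    | false =>
      have pdZ : pD Z (sig Z) h (Z+1) = Z + 1 := by
        apply pD_eq_of' Z (sig Z) h (Z+1) (Z+1) (by omega) (by omega) (by omega) hp rfl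
        intro s hs0 hs1 hs2 hs3 hss
        rw [sig_Zsucc Z hZ] at hss
        have := (sig_eq_two_iff Z s hZ).1 hss
        omega
      rw [sig_Zsucc Z hZ, hp, pdZ]
      norm_num
  have e4 : ∑ t ∈ Finset.Ioc (Z+1) (2*Z - Z/2),
      (if sig Z t = 0 ∨ h t then 0 else Z - (t - pD Z (sig Z) h t)) = 0 := by
    refine Finset.sum_eq_zero fun t ht => ?_
    rw [Finset.mem_Ioc] at ht
    rw [sig_zero Z t hZ (by omega) (by omega) (by omega) (by omega) (by omega)]
    simp
  have e5 : ∑ t ∈ Finset.Ioc (2*Z - Z/2) (2*Z),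
      (if sig Z t = 0 ∨ h t then 0 else Z - (t - pD Z (sig Z) h t)) =
      (if q then 0 else if p then G Z - G (Z - Z / 2) else G (Z / 2)) := by
    cases q with
    | true =>
      refine Finset.sum_eq_zero fun t ht => ?_
      rw [Finset.mem_Ioc] at ht
      rw [hq t (by omega) (by omega)]
      simp
    | false =>
      cases p with
      | true =>
        have hcong : ∀ t ∈ Finset.Ioc (2*Z - Z/2) (2*Z),
            (if sig Z t = 0 ∨ h t then 0 else Z - (t - pD Z (sig Z) h t)) =
            3*Z - Z/2 + 1 - t := by
          intro t ht
          rw [Finset.mem_Ioc] at ht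
          have hst : sig Z t = 2 := sig_burst Z t hZ (by omega) (by omega)
          have hht : h t = false := hq t (by omega) (by omega)
          have hpd : pD Z (sig Z) h t = 2*Z - Z/2 + 1 := by
            apply pD_eq_of' Z (sig Z) h t (2*Z - Z/2 + 1) (by omega) (by omega) (by omega)
              (hq _ (by omega) (by omega))
              (by rw [hst, sig_burst Z _ hZ (by omega) (by omega)])
            intro s hs0 hs1 hs2 hs3 hss
            rw [hst] at hss
            rcases (sig_eq_two_iff Z s hZ).1 hss with h' | h' | h'
            · omega
            · rw [h', hp] at hs3; simp at hs3
            · omega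
          rw [hst, hht, hpd, if_neg (by simp)]
          omega
        rw [Finset.sum_congr rfl hcong,
          sum_Ioc_sub (3*Z - Z/2) (2*Z) (2*Z - Z/2) (by omega) (by omega),
          show 3*Z - Z/2 - (2*Z - Z/2) = Z by omega,
          show 3*Z - Z/2 - 2*Z = Z - Z/2 by omega]
        simp
      | false =>
        have hcong : ∀ t ∈ Finset.Ioc (2*Z - Z/2) (2*Z),
            (if sig Z t = 0 ∨ h t then 0 else Z - (t - pD Z (sig Z) h t)) =
            2*Z + 1 - t := by
          intro t ht
          rw [Finset.mem_Ioc] at ht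
          have hst : sig Z t = 2 := sig_burst Z t hZ (by omega) (by omega)
          have hht : h t = false := hq t (by omega) (by omega)
          have hpd : pD Z (sig Z) h t = Z + 1 := by
            apply pD_eq_of' Z (sig Z) h t (Z+1) (by omega) (by omega) (by omega) hp
              (by rw [hst, sig_Zsucc Z hZ])
            intro s hs0 hs1 hs2 hs3 hss
            rw [hst] at hss
            have := (sig_eq_two_iff Z s hZ).1 hss
            omega
          rw [hst, hht, hpd, if_neg (by simp)]
          omega
        rw [Finset.sum_congr rfl hcong,
          sum_Ioc_sub (2*Z) (2*Z) (2*Z - Z/2) (by omega) (by omega),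
          show 2*Z - (2*Z - Z/2) = Z/2 by omega, Nat.sub_self, G_zero, Nat.sub_zero]
        simp
  have e6 : ∑ t ∈ Finset.Ioc (2*Z) (3*Z),
      (if sig Z t = 0 ∨ h t then 0 else Z - (t - pD Z (sig Z) h t)) = 0 := by
    refine Finset.sum_eq_zero fun t ht => ?_
    rw [Finset.mem_Ioc] at ht
    rw [sig_zero Z t hZ (by omega) (by omega) (by omega) (by omega) (by omega)]
    simp
  have e7 : ∑ t ∈ Finset.Ioc (3*Z) (4*Z),
      (if sig Z t = 0 ∨ h t then 0 else Z - (t - pD Z (sig Z) h t)) =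
      (if r then 0 else G Z) := by
    cases r with
    | true =>
      refine Finset.sum_eq_zero fun t ht => ?_
      rw [Finset.mem_Ioc] at ht
      rw [hr t (by omega) (by omega)]
      simp
    | false =>
      have hcong : ∀ t ∈ Finset.Ioc (3*Z) (4*Z),
          (if sig Z t = 0 ∨ h t then 0 else Z - (t - pD Z (sig Z) h t)) =
          4*Z + 1 - t := by
        intro t ht
        rw [Finset.mem_Ioc] at ht
        have hst : sig Z t = 3 := sig_tail Z t hZ (by omega) (by omega)
        have hht : h t = false := hr t (by omega) (by omega)
        have hpd : pD Z (sig Z) h t = 3*Z + 1 := by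
          apply pD_eq_of' Z (sig Z) h t (3*Z+1) (by omega) (by omega) (by omega)
            (hr _ (by omega) (by omega))
            (by rw [hst, sig_tail Z _ hZ (by omega) (by omega)])
          intro s hs0 hs1 hs2 hs3 hss
          rw [hst] at hss
          have := (sig_eq_three_iff Z s hZ).1 hss
          omega
        rw [hst, hht, hpd, if_neg (by simp)]
        omega
      rw [Finset.sum_congr rfl hcong,
        sum_Ioc_sub (4*Z) (4*Z) (3*Z) (by omega) (by omega),
        show 4*Z - 3*Z = Z by omega, Nat.sub_self, G_zero, Nat.sub_zero]
      simp
  rw [e1, e2, e3, e4, e5, e6, e7]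
  cases p <;> cases q <;> cases r <;> simp <;> omega
/-- schedule realizing `b` -/
def Cb (Z : ℕ) : ℕ → Finset ℕ := fun t => if t ≤ Z then {1} else {3}

/-- schedule realizing `b'` -/
def Cb' (Z : ℕ) : ℕ → Finset ℕ :=
  fun t => if t ≤ Z - 1 then {1} else if t = Z then {2} else {3}

lemma isSched_Cb (Z : ℕ) (hZ : 5 ≤ Z) : IsSchedule Z 1 (sig Z) (Cb Z) := by
  refine ⟨by simp [Cb], fun t => by simp only [Cb]; split <;> simp, fun t ht => ?_⟩
  by_cases hT : t = Z + 1
  · subst hT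
    rw [if_pos]
    · rw [show Z + 1 + 1 - Z = 2 by omega, sig_two Z hZ, show Z + 1 - 1 = Z by omega]
      simp only [Cb, if_neg (by omega : ¬ Z + 1 ≤ Z), if_pos (le_refl Z)]
      intro x hx
      simp only [Finset.mem_singleton] at hx
      simp [hx]
    · refine ⟨by omega, ?_, ?_⟩
      · rw [show Z + 1 + 1 - Z = 2 by omega, sig_two Z hZ]; omega
      · rw [show Z + 1 + 1 - Z = 2 by omega, sig_two Z hZ, show Z + 1 - Z = 1 by omega]
        simp [Cb, (by omega : (1:ℕ) ≤ Z)]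
  · have heq : Cb Z t = Cb Z (t - 1) := by
      simp only [Cb]; split_ifs <;> first | rfl | omega
    split
    · rw [heq]; exact Finset.subset_union_left
    · exact heq

lemma isSched_Cb' (Z : ℕ) (hZ : 5 ≤ Z) : IsSchedule Z 1 (sig Z) (Cb' Z) := by
  refine ⟨by simp [Cb', (by omega : (0:ℕ) ≤ Z - 1)],
    fun t => by simp only [Cb']; split_ifs <;> simp, fun t ht => ?_⟩
  by_cases hT0 : t = Z
  · rw [if_pos]
    · rw [show t + 1 - Z = 1 by omega, sig_one]
      simp only [Cb', if_neg (by omega : ¬ t ≤ Z - 1), if_pos hT0,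
        if_pos (by omega : t - 1 ≤ Z - 1)]
      intro x hx
      simp only [Finset.mem_singleton] at hx
      simp [hx]
    · refine ⟨by omega, ?_, ?_⟩
      · rw [show t + 1 - Z = 1 by omega, sig_one]; omega
      · rw [show t + 1 - Z = 1 by omega, sig_one, show t - Z = 0 by omega]
        simp only [Cb', if_pos (by omega : (0:ℕ) ≤ Z - 1), Finset.mem_singleton]
        omega
  · by_cases hT : t = Z + 1
    · subst hT
      rw [if_pos]
      · rw [show Z + 1 + 1 - Z = 2 by omega, sig_two Z hZ, show Z + 1 - 1 = Z by omega]
        simp only [Cb', if_neg (by omega : ¬ Z + 1 ≤ Z - 1), if_neg (by omega : ¬ Z + 1 = Z),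
          if_neg (by omega : ¬ Z ≤ Z - 1), if_pos rfl]
        intro x hx
        simp only [Finset.mem_singleton] at hx
        simp [hx]
      · refine ⟨by omega, ?_, ?_⟩
        · rw [show Z + 1 + 1 - Z = 2 by omega, sig_two Z hZ]; omega
        · rw [show Z + 1 + 1 - Z = 2 by omega, sig_two Z hZ, show Z + 1 - Z = 1 by omega]
          simp [Cb', (by omega : (1:ℕ) ≤ Z - 1)]
    · have heq : Cb' Z t = Cb' Z (t - 1) := by
        simp only [Cb']; split_ifs <;> first | rfl | omega
      split
      · rw [heq]; exact Finset.subset_union_left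
      · exact heq

lemma hit_Cb (Z : ℕ) (hZ : 5 ≤ Z) (t : ℕ) (h1 : 1 ≤ t) (h2 : t ≤ 4 * Z) :
    hitOf (sig Z) (Cb Z) t = decide (3 * Z + 1 ≤ t ∧ t ≤ 4 * Z) := by
  simp only [hitOf, Cb, sig]
  split_ifs <;> simp only [Finset.mem_singleton, decide_eq_decide] <;>
      first
      | omega
      | (rw [iff_true]; omega)
      | (rw [true_iff]; omega)
      | (rw [iff_false]; omega)
      | (rw [false_iff]; omega)

lemma hit_Cb' (Z : ℕ) (hZ : 5 ≤ Z) (t : ℕ) (h1 : 1 ≤ t) (h2 : t ≤ 4 * Z) :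
    hitOf (sig Z) (Cb' Z) t = decide (t = Z + 1 ∨ (3 * Z + 1 ≤ t ∧ t ≤ 4 * Z)) := by
  simp only [hitOf, Cb', sig]
  split_ifs <;> simp only [Finset.mem_singleton, decide_eq_decide] <;>
      first
      | omega
      | (rw [iff_true]; omega)
      | (rw [true_iff]; omega)
      | (rw [iff_false]; omega)
      | (rw [false_iff]; omega)

lemma sched_const {Z : ℕ} {σ : ℕ → ℕ} {C : ℕ → Finset ℕ} (hC : IsSchedule Z 1 σ C)
    (a : ℕ) : ∀ b, a ≤ b →
    (∀ t, a < t → t ≤ b → ¬(Z ≤ t ∧ σ (t + 1 - Z) ≠ 0 ∧ σ (t + 1 - Z) ∉ C (t - Z))) →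
    C b = C a := by
  intro b
  induction b with
  | zero => intro hb _; rw [Nat.le_zero.mp hb]
  | succ n ih =>
    intro hab hcond
    rcases Nat.eq_or_lt_of_le hab with hh | hh
    · rw [hh]
    · have h3 := hC.2.2 (n+1) (by omega)
      rw [if_neg (hcond (n+1) (by omega) (by omega))] at h3
      rw [h3, Nat.add_sub_cancel]
      exact ih (by omega) (fun t ht1 ht2 => hcond t ht1 (by omega))
/-- The modified sequence `σ'` (cache size `k = 1`, `z = ⌊Z/2⌋`): item `2` at
time `1`, item `3` at time `2`, item `2` at time `Z+1` and at times
`2Z-z+1, …, 2Z`, and item `3` at times `3Z+1, …, 4Z`.  For `Z ≥ 5`: the hit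
vector `b` with a miss at time `Z+1` (hitting exactly at `3Z+1, …, 4Z`) and
the vector `b'` equal to `b` except for a hit at time `Z+1` are both feasible,
`b` has strictly smaller latency than `b'`, and `b` attains the minimum
latency over all feasible executions. -/
theorem modified_sequence_optimal_miss (Z : ℕ) (hZ : 5 ≤ Z) :
    let z := Z / 2
    let σ : ℕ → ℕ := fun t =>
      if t = 1 then 2 else if t = 2 then 3 else if t = Z + 1 then 2
      else if 2 * Z - z + 1 ≤ t ∧ t ≤ 2 * Z then 2
      else if 3 * Z + 1 ≤ t ∧ t ≤ 4 * Z then 3 else 0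
    let b : ℕ → Bool := fun t => decide (3 * Z + 1 ≤ t ∧ t ≤ 4 * Z)
    let b' : ℕ → Bool := fun t =>
      decide (t = Z + 1 ∨ (3 * Z + 1 ≤ t ∧ t ≤ 4 * Z))
    (∃ C, IsSchedule Z 1 σ C ∧
        ∀ t, 1 ≤ t → t ≤ 4 * Z → hitOf σ C t = b t) ∧
    (∃ C, IsSchedule Z 1 σ C ∧
        ∀ t, 1 ≤ t → t ≤ 4 * Z → hitOf σ C t = b' t) ∧
    latN Z (4 * Z) σ b < latN Z (4 * Z) σ b' ∧
    (∀ C, IsSchedule Z 1 σ C →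
        latN Z (4 * Z) σ b ≤ latN Z (4 * Z) σ (hitOf σ C)) := by
  intro z σ b b'
  have hσ : σ = sig Z := rfl
  have hbb : b = fun t => decide (3 * Z + 1 ≤ t ∧ t ≤ 4 * Z) := rfl
  have hbb' : b' = fun t => decide (t = Z + 1 ∨ (3 * Z + 1 ≤ t ∧ t ≤ 4 * Z)) := rfl
  have hGZ := G_add (Z - Z / 2) (Z / 2)
  rw [show Z - Z / 2 + Z / 2 = Z by omega] at hGZ
  have hM : Z < (Z - Z / 2) * (Z / 2) := by
    have a1 : 2 ≤ Z / 2 := by omega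
    have a2 : 3 ≤ Z - Z / 2 := by omega
    have a3 : Z ≤ Z / 2 + (Z - Z / 2) := by omega
    nlinarith
  set M := (Z - Z / 2) * (Z / 2) with hMdef
  have mb : latN Z (4 * Z) (sig Z) (fun t => decide (3 * Z + 1 ≤ t ∧ t ≤ 4 * Z)) =
      2 * Z + Z + G (Z / 2) := by
    rw [master Z hZ (fun t => decide (3 * Z + 1 ≤ t ∧ t ≤ 4 * Z)) false false true
      (by simp only [decide_eq_false_iff_not]; omega)
      (by simp only [decide_eq_false_iff_not]; omega)
      (by simp only [decide_eq_false_iff_not]; omega)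
      (fun t h1 h2 => by simp only [decide_eq_false_iff_not]; omega)
      (fun t h1 h2 => by simp only [decide_eq_true_eq]; omega)]
    norm_num
  have mb' : latN Z (4 * Z) (sig Z)
        (fun t => decide (t = Z + 1 ∨ (3 * Z + 1 ≤ t ∧ t ≤ 4 * Z))) =
      2 * Z + (G Z - G (Z - Z / 2)) := by
    rw [master Z hZ (fun t => decide (t = Z + 1 ∨ (3 * Z + 1 ≤ t ∧ t ≤ 4 * Z))) true false true
      (by simp only [decide_eq_false_iff_not]; omega)
      (by simp only [decide_eq_false_iff_not]; omega)
      (by simp)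
      (fun t h1 h2 => by simp only [decide_eq_false_iff_not]; omega)
      (fun t h1 h2 => by simp only [decide_eq_true_eq]; omega)]
    norm_num
  refine ⟨⟨Cb Z, isSched_Cb Z hZ, fun t h1 h2 => hit_Cb Z hZ t h1 h2⟩,
      ⟨Cb' Z, isSched_Cb' Z hZ, fun t h1 h2 => hit_Cb' Z hZ t h1 h2⟩, ?_, ?_⟩
  · show latN Z (4 * Z) (sig Z) b < latN Z (4 * Z) (sig Z) b'
    rw [hbb, hbb', mb, mb']
    omega
  · intro C hC
    rw [hσ] at hC
    show latN Z (4 * Z) (sig Z) b ≤ latN Z (4 * Z) (sig Z) (hitOf (sig Z) C)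
    rw [hbb, mb]
    have hC0 : C 0 = {1} := by rw [hC.1, Finset.Icc_self]
    have hCpre : ∀ v, v ≤ Z - 1 → C v = {1} := by
      intro v hv
      rw [← hC0]
      refine sched_const hC 0 v (by omega) (fun u hu1 hu2 hcon => ?_)
      exact absurd hcon.1 (by omega)
    have const1 : ∀ v, Z + 1 ≤ v → v ≤ 2 * Z - 1 → C v = C (Z + 1) := by
      intro v h1 h2
      refine sched_const hC (Z + 1) v h1 (fun u hu1 hu2 hcon => ?_)
      exact hcon.2.1 (sig_zero Z (u + 1 - Z) hZ (by omega) (by omega) (by omega)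
        (by omega) (by omega))
    have const2 : ∀ v, 3 * Z - 1 ≤ v → v ≤ 4 * Z - 1 → C v = C (3 * Z - 1) := by
      intro v h1 h2
      refine sched_const hC (3 * Z - 1) v h1 (fun u hu1 hu2 hcon => ?_)
      exact hcon.2.1 (sig_zero Z (u + 1 - Z) hZ (by omega) (by omega) (by omega)
        (by omega) (by omega))
    have hh1 : hitOf (sig Z) C 1 = false := by
      simp only [hitOf, sig_one, show (1:ℕ) - 1 = 0 from rfl, hC0]
      simp
    have hh2 : hitOf (sig Z) C 2 = false := by
      have hc1 : C 1 = {1} := hCpre 1 (by omega)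
      simp only [hitOf, sig_two Z hZ, show (2:ℕ) - 1 = 1 from rfl, hc1]
      simp
    have hhp : hitOf (sig Z) C (Z + 1) = decide (2 ∈ C Z) := by
      simp only [hitOf, sig_Zsucc Z hZ, Nat.add_sub_cancel]
    have hhq : ∀ t, 2 * Z - Z / 2 + 1 ≤ t → t ≤ 2 * Z →
        hitOf (sig Z) C t = decide (2 ∈ C (Z + 1)) := by
      intro t h1 h2
      simp only [hitOf]
      rw [sig_burst Z t hZ h1 h2, const1 (t - 1) (by omega) (by omega)]
    have hhr : ∀ t, 3 * Z + 1 ≤ t → t ≤ 4 * Z →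
        hitOf (sig Z) C t = decide (3 ∈ C (3 * Z - 1)) := by
      intro t h1 h2
      simp only [hitOf]
      rw [sig_tail Z t hZ h1 h2, const2 (t - 1) (by omega) (by omega)]
    have hqp : 2 ∈ C (Z + 1) → 2 ∈ C Z := by
      intro hmem
      have step := hC.2.2 (Z + 1) (by omega)
      rw [show Z + 1 + 1 - Z = 2 by omega, sig_two Z hZ, Nat.add_sub_cancel,
        show Z + 1 - Z = 1 by omega] at step
      by_cases hcond : Z ≤ Z + 1 ∧ 3 ≠ 0 ∧ 3 ∉ C 1
      · rw [if_pos hcond] at step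
        rcases Finset.mem_union.1 (step hmem) with hx | hx
        · exact hx
        · simp at hx
      · rw [if_neg hcond] at step
        rw [← step]; exact hmem
    have hq2 : 2 ∈ C (Z + 1) → C (3 * Z - 1) = C (Z + 1) := by
      intro hmem
      have h2Z : 2 ∈ C Z := hqp hmem
      have c1 : C (2 * Z - 1) = C (Z + 1) := const1 (2 * Z - 1) (by omega) (by omega)
      have step := hC.2.2 (2 * Z) (by omega)
      rw [show 2 * Z + 1 - Z = Z + 1 by omega, sig_Zsucc Z hZ,
        show 2 * Z - Z = Z by omega] at step
      rw [if_neg (fun hcon => hcon.2.2 h2Z)] at step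
      have c3 : C (3 * Z - Z / 2 - 1) = C (2 * Z) := by
        refine sched_const hC (2 * Z) _ (by omega) (fun u hu1 hu2 hcon => ?_)
        exact hcon.2.1 (sig_zero Z (u + 1 - Z) hZ (by omega) (by omega) (by omega)
          (by omega) (by omega))
      have c4 : C (3 * Z - 1) = C (3 * Z - Z / 2 - 1) := by
        refine sched_const hC (3 * Z - Z / 2 - 1) _ (by omega) (fun u hu1 hu2 hcon => ?_)
        refine hcon.2.2 ?_
        rw [const1 (u - Z) (by omega) (by omega),
          sig_burst Z (u + 1 - Z) hZ (by omega) (by omega)]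
        exact hmem
      rw [c4, c3, step, show 2 * Z - 1 = 2 * Z - 1 from rfl, c1]
    have hfin : 2 ∈ C (Z + 1) → 3 ∈ C (3 * Z - 1) → False := by
      intro hm2 hm3
      rw [hq2 hm2] at hm3
      have h23 := Finset.card_le_one.1 (hC.2.1 (Z + 1)) 2 hm2 3 hm3
      omega
    rw [master Z hZ (hitOf (sig Z) C) (decide (2 ∈ C Z)) (decide (2 ∈ C (Z + 1)))
      (decide (3 ∈ C (3 * Z - 1))) hh1 hh2 hhp hhq hhr]
    by_cases P : 2 ∈ C Z <;> by_cases Q : 2 ∈ C (Z + 1) <;>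
      by_cases R : 3 ∈ C (3 * Z - 1) <;>
      (try simp [P, Q, R]) <;>
      first
        | omega
        | (exact absurd (hqp Q) P)
        | (exact (hfin Q R).elim)
end
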